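/- arXiv:1401.0482 — 3 statements merged into one kernel-verified Lean document; each statement's English description precedes it below -/
import Mathlib

section
/- Let Q ∈ ℂ^{N×N}, s ≥ 0, and u, v ∈ ℂ^N unit vectors with Q v = s u and Q* u = s v (a singular pair). Partition u = (u₁, u₂), v = (v₁, v₂) with u_i, v_i ∈ ℂ^n (N = 2n), and suppose Q = [[B₁, γI],[0, B₂]] with γ ∈ ℝ. Then γ u₁* v₂ = s (‖u₁‖² − ‖v₁‖²). In particular γ u₁* v₂ is real. -/
open Matrix
noncomputable def specNorm {m : Type*} [Fintype m] [DecidableEq m] (A : Matrix m m ℂ) : ℝ :=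
  ‖Matrix.toEuclideanCLM (𝕜 := ℂ) A‖
noncomputable def sVal {m : Type*} [Fintype m] [DecidableEq m] (A : Matrix m m ℂ) (j : ℕ) : ℝ :=
  sInf {r : ℝ | ∃ B : Matrix m m ℂ, B.rank < j ∧ specNorm (A - B) = r}

theorem stmt9 {n : ℕ} (B1 B2 : Matrix (Fin n) (Fin n) ℂ) (gam : ℝ) (s : ℝ) (hs : 0 ≤ s)
    (u v : Fin n ⊕ Fin n → ℂ)
    (hu : star u ⬝ᵥ u = 1) (hv : star v ⬝ᵥ v = 1)
    (hQv : (Matrix.fromBlocks B1 ((gam : ℂ) • 1) 0 B2).mulVec v = (s : ℂ) • u)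
    (hQu : (Matrix.fromBlocks B1 ((gam : ℂ) • 1) 0 B2)ᴴ.mulVec u = (s : ℂ) • v) :
    (gam : ℂ) * (star (u ∘ Sum.inl) ⬝ᵥ (v ∘ Sum.inr)) =
      (s : ℂ) * ((star (u ∘ Sum.inl) ⬝ᵥ (u ∘ Sum.inl)) -
        (star (v ∘ Sum.inl) ⬝ᵥ (v ∘ Sum.inl))) := by
  set u1 := u ∘ Sum.inl with hu1
  set u2 := u ∘ Sum.inr with hu2
  set v1 := v ∘ Sum.inl with hv1
  set v2 := v ∘ Sum.inr with hv2
  have hueq : u = Sum.elim u1 u2 := (Sum.elim_comp_inl_inr u).symm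
  have hveq : v = Sum.elim v1 v2 := (Sum.elim_comp_inl_inr v).symm
  rw [hveq, Matrix.fromBlocks_mulVec] at hQv
  rw [Matrix.fromBlocks_conjTranspose, hueq, Matrix.fromBlocks_mulVec] at hQu
  -- first block of hQv : B1 *ᵥ v1 + γ • v2 = s • u1
  have h1 : B1 *ᵥ v1 + (gam : ℂ) • v2 = (s : ℂ) • u1 := by
    funext i
    have := congrFun hQv (Sum.inl i)
    simpa [smul_mulVec, Matrix.one_mulVec, hu1] using this
  -- first block of hQu : B1ᴴ *ᵥ u1 = s • v1
  have h2 : B1ᴴ *ᵥ u1 = (s : ℂ) • v1 := by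
    funext i
    have := congrFun hQu (Sum.inl i)
    simpa [Matrix.zero_mulVec, hv1] using this
  have key : star u1 ⬝ᵥ (B1 *ᵥ v1) = (s : ℂ) * (star v1 ⬝ᵥ v1) := by
    have : star u1 ⬝ᵥ (B1 *ᵥ v1) = star (B1ᴴ *ᵥ u1) ⬝ᵥ v1 := by
      rw [Matrix.star_mulVec, Matrix.conjTranspose_conjTranspose,
        Matrix.dotProduct_mulVec]
    rw [this, h2, star_smul, smul_dotProduct]
    simp [Complex.conj_ofReal]
  have h3 : star u1 ⬝ᵥ (B1 *ᵥ v1 + (gam : ℂ) • v2) = star u1 ⬝ᵥ ((s : ℂ) • u1) := by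
    rw [h1]
  rw [dotProduct_add, dotProduct_smul, key, dotProduct_smul] at h3
  rw [smul_eq_mul, smul_eq_mul] at h3
  linear_combination h3
end

section
/- Let B₁ = A − λ₁I, B₂ = A − λ₂I with λ₁ ≠ λ₂, s > 0, γ ∈ ℂ, and let (u, v) be a singular pair of Q = [[B₁, γI],[0, B₂]] for singular value s (Qv = su, Q*u = sv), with u = (u₁,u₂), v = (v₁,v₂). If u₁* v₂ = 0, then ‖u₁‖ = ‖v₁‖ and ‖u₂‖ = ‖v₂‖ and u₁* u₂ = v₁* v₂; i.e., with U = [u₁ u₂] and V = [v₁ v₂] (n×2 matrices), U*U = V*V. -/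
open Matrix
/-!
Write `⟨x, y⟩ = x* y`. The four block equations of `Q v = s u`, `Q* u = s v` are

  `B₁ v₁ + γ v₂ = s u₁`,  `B₂ v₂ = s u₂`,  `B₁* u₁ = s v₁`,  `γ̄ u₁ + B₂* u₂ = s v₂`.

Testing the third against `v₁` and using the first gives `s ⟨v₁, v₁⟩ = s ⟨u₁, u₁⟩ - γ ⟨u₁, v₂⟩`;
testing the fourth against `v₂` and using the second gives
`s ⟨v₂, v₂⟩ - γ ⟨u₁, v₂⟩ = s ⟨u₂, u₂⟩`; testing the third against `v₂` and using
`B₁ = B₂ + (λ₂ - λ₁) I` gives `s ⟨v₁, v₂⟩ = s ⟨u₁, u₂⟩ + (λ₂ - λ₁) ⟨u₁, v₂⟩`.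
All coupling terms are multiples of `⟨u₁, v₂⟩ = 0`, and `s ≠ 0` can be cancelled.
-/

namespace Matrix

variable {m 𝕜 : Type*} [Fintype m] [Field 𝕜] [StarRing 𝕜]

theorem star_conjTranspose_mulVec_dotProduct (B : Matrix m m 𝕜) (x y : m → 𝕜) :
    star (Bᴴ *ᵥ x) ⬝ᵥ y = star x ⬝ᵥ (B *ᵥ y) := by
  rw [star_mulVec, conjTranspose_conjTranspose, ← dotProduct_mulVec]

def IsSingularPair {ι : Type*} [Fintype ι] (Q : Matrix ι ι 𝕜) (s : 𝕜) (u v : ι → 𝕜) : Prop :=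
  Q *ᵥ v = s • u ∧ Qᴴ *ᵥ u = s • v

section BlockUpperTriangular

variable {B₁ B₂ C : Matrix m m 𝕜} {s : 𝕜} {u v : m ⊕ m → 𝕜}

theorem IsSingularPair.fromBlocks_eqs (h : IsSingularPair (fromBlocks B₁ C 0 B₂) s u v) :
    B₁ *ᵥ (v ∘ Sum.inl) + C *ᵥ (v ∘ Sum.inr) = s • (u ∘ Sum.inl) ∧
    B₂ *ᵥ (v ∘ Sum.inr) = s • (u ∘ Sum.inr) ∧
    B₁ᴴ *ᵥ (u ∘ Sum.inl) = s • (v ∘ Sum.inl) ∧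
    Cᴴ *ᵥ (u ∘ Sum.inl) + B₂ᴴ *ᵥ (u ∘ Sum.inr) = s • (v ∘ Sum.inr) := by
  obtain ⟨hQv, hQu⟩ := h
  rw [fromBlocks_mulVec] at hQv
  rw [fromBlocks_conjTranspose, fromBlocks_mulVec] at hQu
  have hv₁ := congrArg (· ∘ Sum.inl) hQv
  have hv₂ := congrArg (· ∘ Sum.inr) hQv
  have hu₁ := congrArg (· ∘ Sum.inl) hQu
  have hu₂ := congrArg (· ∘ Sum.inr) hQu
  simp only [Sum.elim_comp_inl, Sum.elim_comp_inr, conjTranspose_zero, zero_mulVec,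
    zero_add, add_zero] at hv₁ hv₂ hu₁ hu₂
  exact ⟨hv₁, hv₂, hu₁, hu₂⟩

variable (h : IsSingularPair (fromBlocks B₁ C 0 B₂) s u v) (hs : star s = s) (hs₀ : s ≠ 0)
include h hs hs₀

theorem IsSingularPair.star_inl_dotProduct_inl
    (hC : star (u ∘ Sum.inl) ⬝ᵥ (C *ᵥ (v ∘ Sum.inr)) = 0) :
    star (u ∘ Sum.inl) ⬝ᵥ (u ∘ Sum.inl) = star (v ∘ Sum.inl) ⬝ᵥ (v ∘ Sum.inl) := by
  obtain ⟨h₁, -, h₃, -⟩ := h.fromBlocks_eqs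
  have key := star_conjTranspose_mulVec_dotProduct B₁ (u ∘ Sum.inl) (v ∘ Sum.inl)
  rw [h₃, eq_sub_of_add_eq h₁, dotProduct_sub, hC, sub_zero, star_smul, hs,
    smul_dotProduct, dotProduct_smul] at key
  exact (smul_right_injective _ hs₀ key).symm

theorem IsSingularPair.star_inr_dotProduct_inr
    (hC : star (u ∘ Sum.inl) ⬝ᵥ (C *ᵥ (v ∘ Sum.inr)) = 0) :
    star (u ∘ Sum.inr) ⬝ᵥ (u ∘ Sum.inr) = star (v ∘ Sum.inr) ⬝ᵥ (v ∘ Sum.inr) := by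
  obtain ⟨-, h₂, -, h₄⟩ := h.fromBlocks_eqs
  have key := star_conjTranspose_mulVec_dotProduct B₂ (u ∘ Sum.inr) (v ∘ Sum.inr)
  rw [eq_sub_of_add_eq' h₄, h₂, star_sub, sub_dotProduct,
    star_conjTranspose_mulVec_dotProduct, hC, sub_zero, star_smul, hs,
    smul_dotProduct, dotProduct_smul] at key
  exact smul_right_injective _ hs₀ key.symm

theorem IsSingularPair.star_inl_dotProduct_inr
    (hB : star (u ∘ Sum.inl) ⬝ᵥ ((B₁ - B₂) *ᵥ (v ∘ Sum.inr)) = 0) :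
    star (u ∘ Sum.inl) ⬝ᵥ (u ∘ Sum.inr) = star (v ∘ Sum.inl) ⬝ᵥ (v ∘ Sum.inr) := by
  obtain ⟨-, h₂, h₃, -⟩ := h.fromBlocks_eqs
  have key := star_conjTranspose_mulVec_dotProduct B₁ (u ∘ Sum.inl) (v ∘ Sum.inr)
  rw [sub_mulVec, dotProduct_sub, sub_eq_zero] at hB
  rw [h₃, hB, h₂, star_smul, hs, smul_dotProduct, dotProduct_smul] at key
  exact (smul_right_injective _ hs₀ key).symm

end BlockUpperTriangular

theorem conjTranspose_mul_self_of_cols (x y : m → 𝕜) :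
    let U : Matrix m (Fin 2) 𝕜 := of fun p j => ![x p, y p] j
    Uᴴ * U = !![star x ⬝ᵥ x, star x ⬝ᵥ y; star y ⬝ᵥ x, star y ⬝ᵥ y] := by
  intro U
  ext i j
  fin_cases i <;> fin_cases j <;> rfl

end Matrix

theorem stmt10_general {n : ℕ} (A : Matrix (Fin n) (Fin n) ℂ) (lam1 lam2 : ℂ)
    (s : ℝ) (hs : 0 < s) (gam : ℂ) (u v : Fin n ⊕ Fin n → ℂ)
    (hQv : (Matrix.fromBlocks (A - lam1 • 1) (gam • 1) 0 (A - lam2 • 1)).mulVec v = (s : ℂ) • u)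
    (hQu : (Matrix.fromBlocks (A - lam1 • 1) (gam • 1) 0 (A - lam2 • 1))ᴴ.mulVec u = (s : ℂ) • v)
    (horth : star (u ∘ Sum.inl) ⬝ᵥ (v ∘ Sum.inr) = 0) :
    let U : Matrix (Fin n) (Fin 2) ℂ := Matrix.of fun p j => ![u (Sum.inl p), u (Sum.inr p)] j
    let V : Matrix (Fin n) (Fin 2) ℂ := Matrix.of fun p j => ![v (Sum.inl p), v (Sum.inr p)] j
    (star (u ∘ Sum.inl) ⬝ᵥ (u ∘ Sum.inl) = star (v ∘ Sum.inl) ⬝ᵥ (v ∘ Sum.inl)) ∧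
    (star (u ∘ Sum.inr) ⬝ᵥ (u ∘ Sum.inr) = star (v ∘ Sum.inr) ⬝ᵥ (v ∘ Sum.inr)) ∧
    (star (u ∘ Sum.inl) ⬝ᵥ (u ∘ Sum.inr) = star (v ∘ Sum.inl) ⬝ᵥ (v ∘ Sum.inr)) ∧
    Uᴴ * U = Vᴴ * V := by
  intro U V
  have hpair : IsSingularPair _ _ u v := ⟨hQv, hQu⟩
  have hs_star : star (s : ℂ) = s := Complex.conj_ofReal s
  have hs₀ : (s : ℂ) ≠ 0 := by exact_mod_cast hs.ne'
  have hC : star (u ∘ Sum.inl) ⬝ᵥ ((gam • 1 : Matrix (Fin n) (Fin n) ℂ) *ᵥ (v ∘ Sum.inr)) = 0 := by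
    rw [smul_mulVec, one_mulVec, dotProduct_smul, horth, smul_zero]
  have hB : star (u ∘ Sum.inl) ⬝ᵥ
      ((A - lam1 • 1 - (A - lam2 • 1)) *ᵥ (v ∘ Sum.inr)) = 0 := by
    rw [sub_sub_sub_cancel_left, ← sub_smul, smul_mulVec, one_mulVec, dotProduct_smul, horth,
      smul_zero]
  have h₁₁ := hpair.star_inl_dotProduct_inl hs_star hs₀ hC
  have h₂₂ := hpair.star_inr_dotProduct_inr hs_star hs₀ hC
  have h₁₂ := hpair.star_inl_dotProduct_inr hs_star hs₀ hB
  have h₂₁ : star (u ∘ Sum.inr) ⬝ᵥ (u ∘ Sum.inl) = star (v ∘ Sum.inr) ⬝ᵥ (v ∘ Sum.inl) := by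
    rw [star_dotProduct, h₁₂, ← star_dotProduct]
  refine ⟨h₁₁, h₂₂, h₁₂, ?_⟩
  rw [show Uᴴ * U = _ from conjTranspose_mul_self_of_cols (u ∘ Sum.inl) (u ∘ Sum.inr),
    show Vᴴ * V = _ from conjTranspose_mul_self_of_cols (v ∘ Sum.inl) (v ∘ Sum.inr),
    h₁₁, h₁₂, h₂₁, h₂₂]

theorem stmt10 {n : ℕ} (A : Matrix (Fin n) (Fin n) ℂ) (lam1 lam2 : ℂ) (hne : lam1 ≠ lam2)
    (s : ℝ) (hs : 0 < s) (gam : ℂ) (u v : Fin n ⊕ Fin n → ℂ)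
    (hQv : (Matrix.fromBlocks (A - lam1 • 1) (gam • 1) 0 (A - lam2 • 1)).mulVec v = (s : ℂ) • u)
    (hQu : (Matrix.fromBlocks (A - lam1 • 1) (gam • 1) 0 (A - lam2 • 1))ᴴ.mulVec u = (s : ℂ) • v)
    (horth : star (u ∘ Sum.inl) ⬝ᵥ (v ∘ Sum.inr) = 0) :
    let U : Matrix (Fin n) (Fin 2) ℂ := Matrix.of fun p j => ![u (Sum.inl p), u (Sum.inr p)] j
    let V : Matrix (Fin n) (Fin 2) ℂ := Matrix.of fun p j => ![v (Sum.inl p), v (Sum.inr p)] j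
    (star (u ∘ Sum.inl) ⬝ᵥ (u ∘ Sum.inl) = star (v ∘ Sum.inl) ⬝ᵥ (v ∘ Sum.inl)) ∧
    (star (u ∘ Sum.inr) ⬝ᵥ (u ∘ Sum.inr) = star (v ∘ Sum.inr) ⬝ᵥ (v ∘ Sum.inr)) ∧
    (star (u ∘ Sum.inl) ⬝ᵥ (u ∘ Sum.inr) = star (v ∘ Sum.inl) ⬝ᵥ (v ∘ Sum.inr)) ∧
    Uᴴ * U = Vᴴ * V :=
  stmt10_general A lam1 lam2 s hs gam u v hQv hQu horth
end

section
/- Let A ∈ ℂ^{n×n}, λ₁ ≠ λ₂ ∈ ℂ, γ ∈ ℝ with γ ≠ 0, and s > 0. Suppose (u, v) ∈ ℂ^{2n} × ℂ^{2n} is a unit singular pair of Q = [[A−λ₁I, γI],[0, A−λ₂I]] for s (i.e., Qv = su, Q*u = sv), with components u = (u₁,u₂), v = (v₁,v₂) satisfying u₁* v₂ = 0 and U*U = V*V for U = [u₁ u₂], V = [v₁ v₂], and suppose V has rank 2. Let Δ = −s U V†. Then (A + Δ) has both λ₁ and λ₂ as eigenvalues, and ‖Δ‖₂ = s. -/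
open Matrix
noncomputable def pinv {n k : ℕ} (V : Matrix (Fin n) (Fin k) ℂ) : Matrix (Fin k) (Fin n) ℂ :=
  (Vᴴ * V)⁻¹ * Vᴴ

open scoped ComplexOrder in
lemma stmt15_dot_aux {k : ℕ} (w : Fin k → ℂ) (h : star w ⬝ᵥ w = 0) : w = 0 :=
  dotProduct_star_self_eq_zero.mp h

set_option maxHeartbeats 1000000 in
set_option synthInstance.maxHeartbeats 400000 in
theorem stmt15 {n : ℕ} (A : Matrix (Fin n) (Fin n) ℂ) (lam1 lam2 : ℂ) (hne : lam1 ≠ lam2)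
    (gam : ℝ) (hgam : gam ≠ 0) (s : ℝ) (hs : 0 < s) (u v : Fin n ⊕ Fin n → ℂ)
    (hu : star u ⬝ᵥ u = 1) (hv : star v ⬝ᵥ v = 1)
    (hQv : (Matrix.fromBlocks (A - lam1 • 1) ((gam : ℂ) • 1) 0 (A - lam2 • 1)).mulVec v
      = (s : ℂ) • u)
    (hQu : (Matrix.fromBlocks (A - lam1 • 1) ((gam : ℂ) • 1) 0 (A - lam2 • 1))ᴴ.mulVec u
      = (s : ℂ) • v)
    (horth : star (u ∘ Sum.inl) ⬝ᵥ (v ∘ Sum.inr) = 0)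
    (U : Matrix (Fin n) (Fin 2) ℂ) (hU : U = Matrix.of fun p j => ![u (Sum.inl p), u (Sum.inr p)] j)
    (V : Matrix (Fin n) (Fin 2) ℂ) (hV : V = Matrix.of fun p j => ![v (Sum.inl p), v (Sum.inr p)] j)
    (hGram : Uᴴ * U = Vᴴ * V) (hrank : V.rank = 2) :
    let Delta : Matrix (Fin n) (Fin n) ℂ := (-(s : ℂ)) • (U * pinv V)
    (∃ w : Fin n → ℂ, w ≠ 0 ∧ (A + Delta).mulVec w = lam1 • w) ∧
    (∃ w : Fin n → ℂ, w ≠ 0 ∧ (A + Delta).mulVec w = lam2 • w) ∧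
    specNorm Delta = s := by
  intro Delta
  have hDel : Delta = (-(s : ℂ)) • (U * pinv V) := rfl
  -- injectivity of V as a map
  have hVinj : ∀ c : Fin 2 → ℂ, V *ᵥ c = 0 → c = 0 := by
    intro c hc
    have h1 := LinearMap.finrank_range_add_finrank_ker V.mulVecLin
    have h2 : Module.finrank ℂ (LinearMap.range V.mulVecLin) = 2 := hrank
    rw [h2] at h1
    simp only [Module.finrank_pi, Fintype.card_fin] at h1
    have hker : Module.finrank ℂ (LinearMap.ker V.mulVecLin) = 0 := by omega
    have hbot : LinearMap.ker V.mulVecLin = ⊥ :=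
      Submodule.finrank_eq_zero.mp hker
    have : c ∈ LinearMap.ker V.mulVecLin := by
      simp [LinearMap.mem_ker, Matrix.mulVecLin_apply, hc]
    rw [hbot] at this
    simpa using this
  -- Gram matrix invertible
  have hGdet : IsUnit (Vᴴ * V).det := by
    rw [isUnit_iff_ne_zero]
    intro h
    obtain ⟨c, hc0, hc⟩ := Matrix.exists_mulVec_eq_zero_iff.mpr h
    have h0 : star c ⬝ᵥ ((Vᴴ * V) *ᵥ c) = 0 := by rw [hc, dotProduct_zero]
    rw [← mulVec_mulVec, dotProduct_mulVec, ← star_mulVec] at h0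
    exact hc0 (hVinj c (stmt15_dot_aux _ h0))
  have hpV : pinv V * V = 1 := by
    rw [pinv, Matrix.mul_assoc, Matrix.nonsing_inv_mul _ hGdet]
  have hDV : Delta * V = (-(s : ℂ)) • U := by
    rw [hDel, Matrix.smul_mul, Matrix.mul_assoc, hpV, Matrix.mul_one]
  -- column access
  have hVcol : ∀ c : Fin 2 → ℂ,
      V *ᵥ c = c 0 • (v ∘ Sum.inl) + c 1 • (v ∘ Sum.inr) := by
    intro c
    funext p
    simp [hV, mulVec, dotProduct, Fin.sum_univ_two]
    ring
  have hUcol : ∀ c : Fin 2 → ℂ,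
      U *ᵥ c = c 0 • (u ∘ Sum.inl) + c 1 • (u ∘ Sum.inr) := by
    intro c
    funext p
    simp [hU, mulVec, dotProduct, Fin.sum_univ_two]
    ring
  -- Delta action on columns
  have hDc : ∀ c : Fin 2 → ℂ, Delta *ᵥ (V *ᵥ c) = (-(s:ℂ)) • (U *ᵥ c) := by
    intro c
    rw [mulVec_mulVec, hDV, Matrix.smul_mulVec]
  have hDv1 : Delta *ᵥ (v ∘ Sum.inl) = (-(s:ℂ)) • (u ∘ Sum.inl) := by
    have := hDc (Pi.single 0 1)
    rw [hVcol, hUcol] at this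
    simpa using this
  have hDv2 : Delta *ᵥ (v ∘ Sum.inr) = (-(s:ℂ)) • (u ∘ Sum.inr) := by
    have := hDc (Pi.single 1 1)
    rw [hVcol, hUcol] at this
    simpa using this
  -- block equations
  rw [Matrix.fromBlocks_mulVec] at hQv
  have hb1 : A *ᵥ (v ∘ Sum.inl) - lam1 • (v ∘ Sum.inl) + (gam:ℂ) • (v ∘ Sum.inr)
      = (s:ℂ) • (u ∘ Sum.inl) := by
    have h : (A - lam1 • 1) *ᵥ (v ∘ Sum.inl) + ((gam:ℂ) • 1) *ᵥ (v ∘ Sum.inr)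
        = (s:ℂ) • (u ∘ Sum.inl) := by
      funext p; exact congrFun hQv (Sum.inl p)
    rwa [Matrix.sub_mulVec, Matrix.smul_mulVec, Matrix.one_mulVec,
      Matrix.smul_mulVec, Matrix.one_mulVec] at h
  have hb2 : A *ᵥ (v ∘ Sum.inr) - lam2 • (v ∘ Sum.inr) = (s:ℂ) • (u ∘ Sum.inr) := by
    have h : (0 : Matrix (Fin n) (Fin n) ℂ) *ᵥ (v ∘ Sum.inl)
        + (A - lam2 • 1) *ᵥ (v ∘ Sum.inr) = (s:ℂ) • (u ∘ Sum.inr) := by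
      funext p; exact congrFun hQv (Sum.inr p)
    rwa [Matrix.zero_mulVec, zero_add, Matrix.sub_mulVec, Matrix.smul_mulVec,
      Matrix.one_mulVec] at h
  -- action of A + Delta on columns
  have hD1 : (A + Delta) *ᵥ (v ∘ Sum.inl)
      = lam1 • (v ∘ Sum.inl) + (-(gam:ℂ)) • (v ∘ Sum.inr) := by
    rw [Matrix.add_mulVec, hDv1]
    funext p
    have hp := congrFun hb1 p
    simp only [Pi.add_apply, Pi.sub_apply, Pi.smul_apply, smul_eq_mul, Pi.neg_apply,
      Function.comp_apply, neg_mul] at hp ⊢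
    linear_combination hp
  have hD2 : (A + Delta) *ᵥ (v ∘ Sum.inr) = lam2 • (v ∘ Sum.inr) := by
    rw [Matrix.add_mulVec, hDv2]
    funext p
    have hp := congrFun hb2 p
    simp only [Pi.add_apply, Pi.sub_apply, Pi.smul_apply, smul_eq_mul, Pi.neg_apply,
      Function.comp_apply, neg_mul] at hp ⊢
    linear_combination hp
  -- nonvanishing of combinations of columns
  have hvne : ∀ c : Fin 2 → ℂ, c ≠ 0 →
      c 0 • (v ∘ Sum.inl) + c 1 • (v ∘ Sum.inr) ≠ 0 := by
    intro c hc0 h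
    exact hc0 (hVinj c (by rw [hVcol]; exact h))
  refine ⟨⟨(lam1 - lam2) • (v ∘ Sum.inl) + (-(gam:ℂ)) • (v ∘ Sum.inr), ?_, ?_⟩,
    ⟨v ∘ Sum.inr, ?_, ?_⟩, ?_⟩
  · -- w1 ≠ 0
    have := hvne ![lam1 - lam2, -(gam:ℂ)] (by
      intro h
      have h1 := congrFun h 1
      simp at h1
      exact hgam h1)
    simpa using this
  · -- eigen equation for lam1
    rw [Matrix.mulVec_add, Matrix.mulVec_smul, Matrix.mulVec_smul, hD1, hD2]
    funext p
    simp only [Pi.add_apply, Pi.smul_apply, smul_eq_mul, Function.comp_apply, Pi.neg_apply]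
    ring
  · -- v2 ≠ 0
    have := hvne (Pi.single 1 1) (by
      intro h
      have h1 := congrFun h 1
      simp at h1)
    simpa using this
  · -- eigen equation for lam2
    exact hD2
  · -- norm
    have hGh : (Vᴴ * V)ᴴ = Vᴴ * V := by
      rw [conjTranspose_mul, conjTranspose_conjTranspose]
    have hPinvH : (pinv V)ᴴ = V * (Vᴴ * V)⁻¹ := by
      rw [pinv, conjTranspose_mul, conjTranspose_conjTranspose,
        conjTranspose_nonsing_inv, hGh]
    set P : Matrix (Fin n) (Fin n) ℂ := V * (Vᴴ * V)⁻¹ * Vᴴ with hPdef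
    have hPV : P * V = V := by
      rw [hPdef, Matrix.mul_assoc, Matrix.mul_assoc, Matrix.nonsing_inv_mul _ hGdet, Matrix.mul_one]
    have hDD : Deltaᴴ * Delta = ((s:ℂ)^2) • P := by
      rw [hDel, conjTranspose_smul, conjTranspose_mul, hPinvH,
        Matrix.smul_mul, Matrix.mul_smul, smul_smul]
      have hsc : star (-(s:ℂ)) * (-(s:ℂ)) = (s:ℂ)^2 := by
        simp [Complex.star_def]
        ring
      rw [hsc]
      congr 1
      rw [pinv]
      simp only [Matrix.mul_assoc]
      rw [← Matrix.mul_assoc Uᴴ U, hGram, ← Matrix.mul_assoc (Vᴴ * V) ((Vᴴ * V)⁻¹) Vᴴ,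
        Matrix.mul_nonsing_inv _ hGdet, Matrix.one_mul, hPdef, Matrix.mul_assoc]
    have hPP : P * P = P := by
      calc P * P = P * V * ((Vᴴ * V)⁻¹ * Vᴴ) := by
            rw [hPdef]; simp only [Matrix.mul_assoc]
        _ = V * ((Vᴴ * V)⁻¹ * Vᴴ) := by rw [hPV]
        _ = P := by rw [hPdef, Matrix.mul_assoc]
    have hPH : Pᴴ = P := by
      rw [hPdef, conjTranspose_mul, conjTranspose_mul, conjTranspose_conjTranspose,
        conjTranspose_nonsing_inv, hGh, ← Matrix.mul_assoc]
    have hVne : V ≠ 0 := by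
      intro h
      have := hVinj (Pi.single 1 1) (by rw [h, Matrix.zero_mulVec])
      have h1 := congrFun this 1
      simp at h1
    have hPne : P ≠ 0 := by
      intro h
      rw [h, Matrix.zero_mul] at hPV
      exact hVne hPV.symm
    -- pass to CLM
    set φ := Matrix.toEuclideanCLM (𝕜 := ℂ) (n := Fin n) with hφ
    have hφPnorm : ‖φ P‖ = 1 := by
      have hsP : star P = P := by
        rw [Matrix.star_eq_conjTranspose]; exact hPH
      have hstar : star (φ P) = φ P := by
        rw [← map_star, hsP]
      have hmul : φ P * φ P = φ P := by rw [← _root_.map_mul, hPP]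
      have hne0 : φ P ≠ 0 := by
        intro h
        apply hPne
        have := congrArg φ.symm h
        rwa [StarAlgEquiv.symm_apply_apply, map_zero] at this
      have hm : ‖φ P‖ * ‖φ P‖ = ‖φ P‖ := by
        rw [← CStarRing.norm_star_mul_self (x := φ P), hstar, hmul]
      have hnn : ‖φ P‖ ≠ 0 := by
        simpa using hne0
      exact mul_left_cancel₀ hnn (by rw [hm, mul_one])
    have hsq : ‖φ Delta‖ * ‖φ Delta‖ = s ^ 2 := by
      rw [← CStarRing.norm_star_mul_self (x := φ Delta)]
      have hsD : star Delta = Deltaᴴ := Matrix.star_eq_conjTranspose Delta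
      have h1 : star (φ Delta) * φ Delta = φ (Deltaᴴ * Delta) := by
        rw [_root_.map_mul, ← map_star, hsD]
      have h2 : ‖((s:ℂ)^2) • φ P‖ = ‖((s:ℂ)^2)‖ * ‖φ P‖ := by exact norm_smul ((s:ℂ)^2) (φ P)
      rw [h1, hDD, _root_.map_smul, h2, hφPnorm, mul_one]
      simp [Complex.norm_real, abs_of_pos hs]
    simp only [specNorm]
    rw [← hφ]
    nlinarith [norm_nonneg (φ Delta), hs]
end
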